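/- In the glued binary tree GT(r), let v_{i,j} be a vertex in the first tree copy and v'_{i,j} the corresponding vertex (same depth, same position) in the second copy, and let v_a be any quasi-leaf that is a descendant (leaf of the subtree) of v_{i,j}. Then there exists a unique geodesic between v_{i,j} and v'_{i,j} passing through v_a; in particular d(v_{i,j}, v'_{i,j}) = 2(r − i + 1) where i−1 is the common depth. -/

import Mathlib

def MVSet {V : Type*} (G : SimpleGraph V) (S : Set V) : Prop :=
  ∀ x ∈ S, ∀ y ∈ S, ∃ p : G.Walk x y, p.IsPath ∧ p.length = G.dist x y ∧
    ∀ z ∈ p.support, z ≠ x → z ≠ y → z ∉ S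

def MVColoring {V : Type*} {α : Type*} (G : SimpleGraph V) (f : V → α) : Prop :=
  ∀ a : α, MVSet G {v | f v = a}

noncomputable def chiMu {V : Type*} (G : SimpleGraph V) : ℕ :=
  sInf {k : ℕ | ∃ f : V → Fin k, MVColoring G f}

/-- `a` is a child of `b` in the tree of finite sequences. -/
def IsChild {t : ℕ} (a b : List (Fin t)) : Prop := ∃ x : Fin t, a = b ++ [x]

/-- The vertex set of the glued `t`-ary tree `GT(r,t)`: vertices of the first
copy of the perfect `t`-ary tree of depth `r` (including the identified leaves,
the quasi-leaves), together with the internal vertices of the second copy. -/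
def GTVert (r t : ℕ) : Type :=
  {l : List (Fin t) // l.length ≤ r} ⊕ {l : List (Fin t) // l.length < r}

/-- The glued `t`-ary tree `GT(r,t)`: two copies of the perfect `t`-ary tree of
depth `r` with their leaves pairwise identified. -/
def GT (r t : ℕ) : SimpleGraph (GTVert r t) :=
  SimpleGraph.fromRel (fun u v =>
    match u, v with
    | .inl a, .inl b => IsChild a.1 b.1
    | .inr a, .inr b => IsChild a.1 b.1
    | .inl a, .inr b => a.1.length = r ∧ IsChild a.1 b.1
    | .inr _, .inl _ => False)

/-- Quasi-leaves of `GT(r,t)`: the identified leaves of the two copies. -/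
def IsQuasiLeaf {r t : ℕ} (v : GTVert r t) : Prop :=
  match v with
  | .inl a => a.1.length = r
  | .inr _ => False

/-- Vertices in the first copy of the tree, not quasi-leaves. -/
def InCopyOne {r t : ℕ} (v : GTVert r t) : Prop :=
  match v with
  | .inl a => a.1.length < r
  | .inr _ => False

/-- Vertices in the second copy of the tree, not quasi-leaves. -/
def InCopyTwo {r t : ℕ} (v : GTVert r t) : Prop :=
  match v with
  | .inl _ => False
  | .inr _ => True

/-- A geodesic: a path realizing the distance between its endpoints. -/
def IsGeodesic {V : Type*} (G : SimpleGraph V) {u v : V} (p : G.Walk u v) : Prop :=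
  p.IsPath ∧ p.length = G.dist u v


/-! The height `|a|` on the first copy and `2r - |a|` on the second changes by at most one along
each edge and rises by `2(r - |l|)` from `v_l` to `v'_l`. This bounds the distance from below, and
going down to the quasi-leaf and back up attains the bound; so a geodesic raises the height at
every step. Read backwards from the quasi-leaf to `v_l`, and forwards from it to `v'_l`, each of
its steps leaves the middle level `r`, i.e. goes to the parent vertex, so both halves are forced. -/

namespace SimpleGraph.Walk

variable {V : Type*} {G : SimpleGraph V} {f : V → ℤ}

theorem sub_le_length (hf : ∀ ⦃u w⦄, G.Adj u w → f w ≤ f u + 1) {u v : V} (p : G.Walk u v) :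
    f v - f u ≤ p.length := by
  induction p with
  | nil => simp
  | cons h _ ih =>
    have := hf h
    rw [length_cons]
    push_cast
    omega

theorem length_eq_sub_of_append (hf : ∀ ⦃u w⦄, G.Adj u w → f w ≤ f u + 1) {u v w : V}
    (p : G.Walk u v) (q : G.Walk v w) (h : ((p.append q).length : ℤ) = f w - f u) :
    (p.length : ℤ) = f v - f u ∧ (q.length : ℤ) = f w - f v := by
  have := sub_le_length hf p
  have := sub_le_length hf q
  rw [length_append] at h
  push_cast at h
  omega

theorem eq_of_length_eq_sub (hf : ∀ ⦃u w⦄, G.Adj u w → f w ≤ f u + 1) (c : ℤ)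
    (hstep : ∀ ⦃u w w'⦄, c ≤ f u → G.Adj u w → G.Adj u w' → f w = f u + 1 → f w' = f u + 1 →
      w = w')
    {u v : V} (hu : c ≤ f u) (p q : G.Walk u v) (hp : (p.length : ℤ) = f v - f u)
    (hq : (q.length : ℤ) = f v - f u) : p = q := by
  induction p with
  | nil =>
    exact (eq_nil_iff_nil.mpr (length_eq_zero_iff.mp (by omega))).symm
  | cons h p ih =>
    cases q with
    | nil =>
      rw [length_cons] at hp
      omega
    | cons h' q =>
      have := sub_le_length hf p
      have := sub_le_length hf q
      have := hf h
      have := hf h'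
      rw [length_cons] at hp hq
      push_cast at hp hq
      obtain rfl := hstep hu h h' (by omega) (by omega)
      rw [ih (by omega) q (by omega) (by omega)]

theorem eq_of_mem_support_of_length_eq_sub (hf : ∀ ⦃u w⦄, G.Adj u w → f w ≤ f u + 1) (c : ℤ)
    (hup : ∀ ⦃u w w'⦄, c ≤ f u → G.Adj u w → G.Adj u w' → f w = f u + 1 → f w' = f u + 1 →
      w = w')
    (hdown : ∀ ⦃u w w'⦄, f u ≤ c → G.Adj u w → G.Adj u w' → f w = f u - 1 → f w' = f u - 1 →
      w = w')
    {u v x : V} (hx : f x = c) (p q : G.Walk u v) (hp : (p.length : ℤ) = f v - f u)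
    (hq : (q.length : ℤ) = f v - f u) (hxp : x ∈ p.support) (hxq : x ∈ q.support) :
    p = q := by
  classical
  have hf' : ∀ ⦃u w⦄, G.Adj u w → -f w ≤ -f u + 1 := fun _ _ h ↦ by
    have := hf h.symm
    omega
  have hdown' : ∀ ⦃u w w'⦄, -c ≤ -f u → G.Adj u w → G.Adj u w' → -f w = -f u + 1 →
      -f w' = -f u + 1 → w = w' := fun _ _ _ hu h h' hw hw' ↦
    hdown (by omega) h h' (by omega) (by omega)
  rw [← p.take_spec hxp] at hp ⊢
  rw [← q.take_spec hxq] at hq ⊢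
  obtain ⟨hp₁, hp₂⟩ := length_eq_sub_of_append hf _ _ hp
  obtain ⟨hq₁, hq₂⟩ := length_eq_sub_of_append hf _ _ hq
  have htake : p.takeUntil x hxp = q.takeUntil x hxq := reverse_injective <|
    eq_of_length_eq_sub hf' (-c) hdown' (by omega) _ _
      (by rw [length_reverse]; omega) (by rw [length_reverse]; omega)
  rw [htake, eq_of_length_eq_sub hf c hup hx.ge _ _ hp₂ hq₂]

end SimpleGraph.Walk

theorem IsChild.length_eq {t : ℕ} {a b : List (Fin t)} (h : IsChild a b) :
    a.length = b.length + 1 := by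
  obtain ⟨x, rfl⟩ := h
  simp

theorem IsChild.dropLast_eq {t : ℕ} {a b : List (Fin t)} (h : IsChild a b) :
    a.dropLast = b := by
  obtain ⟨x, rfl⟩ := h
  simp

namespace GTVert

variable {r t : ℕ}

def label : GTVert r t → List (Fin t)
  | .inl a => a.1
  | .inr a => a.1

def height : GTVert r t → ℤ
  | .inl a => a.1.length
  | .inr a => 2 * r - a.1.length

theorem eq_of_height_eq_of_label_eq {v w : GTVert r t} (hh : v.height = w.height)
    (hl : v.label = w.label) : v = w := by
  rcases v with ⟨a, ha⟩ | ⟨a, ha⟩ <;> rcases w with ⟨b, hb⟩ | ⟨b, hb⟩ <;>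
    simp only [height, label] at hh hl <;> subst hl
  · rfl
  · omega
  · omega
  · rfl

end GTVert

namespace GT

open GTVert

variable {r t : ℕ}

theorem adj_inl_inl {a b : {l : List (Fin t) // l.length ≤ r}} :
    (GT r t).Adj (.inl a) (.inl b) ↔ IsChild a.1 b.1 ∨ IsChild b.1 a.1 := by
  refine (SimpleGraph.fromRel_adj _ _ _).trans ⟨And.right, fun h ↦ ⟨?_, h⟩⟩
  intro hab
  cases Sum.inl_injective hab
  rcases h with h | h <;> simpa using h.length_eq

theorem adj_inr_inr {a b : {l : List (Fin t) // l.length < r}} :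
    (GT r t).Adj (.inr a) (.inr b) ↔ IsChild a.1 b.1 ∨ IsChild b.1 a.1 := by
  refine (SimpleGraph.fromRel_adj _ _ _).trans ⟨And.right, fun h ↦ ⟨?_, h⟩⟩
  intro hab
  cases Sum.inr_injective hab
  rcases h with h | h <;> simpa using h.length_eq

theorem adj_inl_inr {a : {l : List (Fin t) // l.length ≤ r}}
    {b : {l : List (Fin t) // l.length < r}} :
    (GT r t).Adj (.inl a) (.inr b) ↔ a.1.length = r ∧ IsChild a.1 b.1 := by
  refine (SimpleGraph.fromRel_adj _ _ _).trans ⟨fun h ↦ ?_, fun h ↦ ⟨nofun, .inl h⟩⟩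
  simpa using h.2

theorem adj_inr_inl {a : {l : List (Fin t) // l.length < r}}
    {b : {l : List (Fin t) // l.length ≤ r}} :
    (GT r t).Adj (.inr a) (.inl b) ↔ b.1.length = r ∧ IsChild b.1 a.1 :=
  (GT r t).adj_comm _ _ |>.trans adj_inl_inr

theorem height_le_of_adj ⦃u w : GTVert r t⦄ (h : (GT r t).Adj u w) :
    w.height ≤ u.height + 1 := by
  rcases u with ⟨a, ha⟩ | ⟨a, ha⟩ <;> rcases w with ⟨b, hb⟩ | ⟨b, hb⟩ <;>
    simp only [adj_inl_inl, adj_inr_inr, adj_inl_inr, adj_inr_inl] at h <;> simp only [height]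
  all_goals
    first
    | rcases h with h | h <;> have := h.length_eq <;> omega
    | have := h.2.length_eq; omega

/-- In a tree, a step away from the middle level `r` can only go to the parent. -/
theorem label_eq_dropLast_of_adj {u w : GTVert r t} (h : (GT r t).Adj u w)
    (hw : r ≤ u.height ∧ w.height = u.height + 1 ∨ u.height ≤ r ∧ w.height = u.height - 1) :
    w.label = u.label.dropLast := by
  rcases u with ⟨a, ha⟩ | ⟨a, ha⟩ <;> rcases w with ⟨b, hb⟩ | ⟨b, hb⟩ <;>
    simp only [adj_inl_inl, adj_inr_inr, adj_inl_inr, adj_inr_inl] at h <;>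
    simp only [height, label] at hw ⊢
  all_goals
    first
    | rcases h with h | h <;> first | exact h.dropLast_eq.symm | (have := h.length_eq; omega)
    | first | exact h.2.dropLast_eq.symm | (have := h.2.length_eq; omega)

theorem eq_of_adj_of_height_eq {u w w' : GTVert r t} (h : (GT r t).Adj u w)
    (h' : (GT r t).Adj u w')
    (hw : r ≤ u.height ∧ w.height = u.height + 1 ∨ u.height ≤ r ∧ w.height = u.height - 1)
    (hww' : w'.height = w.height) : w' = w :=
  eq_of_height_eq_of_label_eq hww' <| (label_eq_dropLast_of_adj h' (hww' ▸ hw)).trans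
    (label_eq_dropLast_of_adj h hw).symm

theorem exists_walk_through_leaf (l s : List (Fin t)) (hl : l.length < r)
    (hs : (l ++ s).length = r) :
    ∃ p : (GT r t).Walk (.inl ⟨l, hl.le⟩) (.inr ⟨l, hl⟩),
      p.length = 2 * (r - l.length) ∧ .inl ⟨l ++ s, hs.le⟩ ∈ p.support := by
  induction s generalizing l with
  | nil => simp at hs; omega
  | cons x s ih =>
    have hx : (l ++ [x]).length ≤ r := by simp at hs ⊢; omega
    have hdown : (GT r t).Adj (.inl ⟨l, hl.le⟩) (.inl ⟨l ++ [x], hx⟩) :=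
      adj_inl_inl.mpr (.inr ⟨x, rfl⟩)
    rcases hx.lt_or_eq with hx | hx
    · obtain ⟨p, hp, hmem⟩ := ih (l ++ [x]) hx (by simpa using hs)
      have hup : (GT r t).Adj (.inr ⟨l ++ [x], hx⟩) (.inr ⟨l, hl⟩) :=
        adj_inr_inr.mpr (.inl ⟨x, rfl⟩)
      refine ⟨.cons hdown (p.concat hup), ?_, ?_⟩
      · refine (congrArg (· + 1) (p.length_concat hup)).trans ?_
        simp only [hp, List.length_append, List.length_singleton] at hx ⊢
        omega
      · simp only [List.append_assoc, List.singleton_append] at hmem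
        exact List.mem_cons_of_mem _ (p.support_subset_support_concat hup hmem)
    · have hglue : (GT r t).Adj (.inl ⟨l ++ [x], hx.le⟩) (.inr ⟨l, hl⟩) :=
        adj_inl_inr.mpr ⟨hx, x, rfl⟩
      refine ⟨.cons hdown (.cons hglue .nil), ?_, ?_⟩
      · show 0 + 1 + 1 = 2 * (r - l.length)
        simp only [List.length_append, List.length_singleton] at hx
        omega
      · obtain rfl : s = [] := by simpa using hs.trans hx.symm
        exact List.mem_cons_of_mem _ List.mem_cons_self

end GT

open GTVert in
theorem GT_corresponding_vertices_geodesic_general (r : ℕ)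
    (l : List (Fin 2)) (hl : l.length < r) (la : List (Fin 2)) (hla : la.length ≤ r)
    (hleaf : la.length = r) (hdesc : l <+: la) :
    (GT r 2).dist (Sum.inl ⟨l, le_of_lt hl⟩) (Sum.inr ⟨l, hl⟩) = 2 * (r - l.length) ∧
    ∃! p : (GT r 2).Walk (Sum.inl ⟨l, le_of_lt hl⟩) (Sum.inr ⟨l, hl⟩),
      IsGeodesic (GT r 2) p ∧ (Sum.inl ⟨la, hla⟩ : GTVert r 2) ∈ p.support := by
  obtain ⟨s, rfl⟩ := hdesc
  obtain ⟨w, hw, hmem⟩ := GT.exists_walk_through_leaf l s hl hleaf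
  have hgap : ((2 * (r - l.length) : ℕ) : ℤ) =
      height (.inr ⟨l, hl⟩ : GTVert r 2) - height (.inl ⟨l, hl.le⟩ : GTVert r 2) := by
    simp only [height]
    omega
  obtain ⟨q, hq⟩ := w.reachable.exists_walk_length_eq_dist
  have hdist : (GT r 2).dist (.inl ⟨l, hl.le⟩) (.inr ⟨l, hl⟩) = 2 * (r - l.length) :=
    le_antisymm (hw ▸ SimpleGraph.dist_le w)
      (by have := q.sub_le_length GT.height_le_of_adj; omega)
  refine ⟨hdist, w, ⟨⟨w.isPath_of_length_eq_dist (hw.trans hdist.symm), hw.trans hdist.symm⟩,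
    hmem⟩, ?_⟩
  rintro p ⟨⟨-, hp⟩, hp'⟩
  exact SimpleGraph.Walk.eq_of_mem_support_of_length_eq_sub GT.height_le_of_adj r
    (fun _ _ _ hu h₁ h₂ hw₁ hw₂ ↦
      GT.eq_of_adj_of_height_eq h₂ h₁ (.inl ⟨hu, hw₂⟩) (hw₁.trans hw₂.symm))
    (fun _ _ _ hu h₁ h₂ hw₁ hw₂ ↦
      GT.eq_of_adj_of_height_eq h₂ h₁ (.inr ⟨hu, hw₂⟩) (hw₁.trans hw₂.symm))
    (by simp only [height, hleaf]) p w (by omega) (by omega) hp' hmem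

/-- For a non-quasi-leaf vertex of the first copy of `GT(r)` and the
corresponding vertex of the second copy, and any quasi-leaf descending from
them, there is a unique geodesic between the two corresponding vertices
passing through that quasi-leaf; moreover their distance is `2 (r - depth)`
(with `depth = i - 1`, this is `2 (r - i + 1)`). -/
theorem GT_corresponding_vertices_geodesic (r : ℕ) (hr : 1 ≤ r)
    (l : List (Fin 2)) (hl : l.length < r) (la : List (Fin 2)) (hla : la.length ≤ r)
    (hleaf : la.length = r) (hdesc : l <+: la) :
    (GT r 2).dist (Sum.inl ⟨l, le_of_lt hl⟩) (Sum.inr ⟨l, hl⟩) = 2 * (r - l.length) ∧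
    ∃! p : (GT r 2).Walk (Sum.inl ⟨l, le_of_lt hl⟩) (Sum.inr ⟨l, hl⟩),
      IsGeodesic (GT r 2) p ∧ (Sum.inl ⟨la, hla⟩ : GTVert r 2) ∈ p.support :=
  GT_corresponding_vertices_geodesic_general r l hl la hla hleaf hdesc
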